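/- Let r ∈ ℝ, A ≥ 0, C > 0, and let (a_n)_{n≥1} be complex numbers with |a_n| ≤ C·n^A. Define W_r(x+iy) = 2√y · K_{ir}(2πy) · cos(2πx) for y > 0 and f(z) = Σ_{n=1}^∞ a_n W_r(nz) for z in the upper half plane. Let T₁ > 0, α₁ = −1 + i/T₁, and let s ∈ ℂ with Re(s) > A + 3/2. Then all the integrals and series below converge absolutely and ∫_0^∞ f(α₁ t) t^{s−3/2} dt = (2 T₁^{s−1/2} / (2π)^s) · ( Σ_{n=1}^∞ a_n n^{−(s−1/2)} ) · ∫_0^∞ cos(T₁ t) K_{ir}(t) t^{s−1} dt, where complex powers of positive reals are exp of the (real) logarithm times the exponent. -/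

import Mathlib

open Real MeasureTheory

/-- The K-Bessel function `K_{ir}(t) = ∫_0^∞ e^{-t cosh u} cos(r u) du`. -/
noncomputable def Kir (r t : ℝ) : ℝ :=
  ∫ u in Set.Ioi (0 : ℝ), Real.exp (-t * Real.cosh u) * Real.cos (r * u)

/-- The Whittaker-type function `W_r(x+iy) = 2√y K_{ir}(2πy) cos(2πx)`. -/
noncomputable def Wr (r : ℝ) (z : ℂ) : ℂ :=
  ((2 * Real.sqrt z.im * Kir r (2 * π * z.im) * Real.cos (2 * π * z.re) : ℝ) : ℂ)

/-!
The left-hand side is the Mellin transform at `s - 1/2` of `t ↦ ∑ aₙ W(n α₁ t)`. Each term is a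
dilate of `φ(t) = W(α₁ t)`, so its Mellin transform is `aₙ n^{-(s-1/2)}` times that of `φ`; the
interchange of sum and integral is justified because the same scaling computes the `L¹` norms,
which are therefore summable exactly when the Dirichlet series converges absolutely. Finally
`φ(t) = 2 (2π)^{-1/2} u^{1/2} cos(T₁ u) K_{ir}(u)` with `u = 2πt/T₁`, and one more dilation gives
the constant. Integrability of `cos(T₁ t) K_{ir}(t) t^{s-1}` comes from
`|K_{ir}(t)| ≤ √(π/(2t)) e^{-t}`, a consequence of `cosh u ≥ 1 + u²/2`.
-/

open Set Complex Filter

section Mellin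

variable {E : Type*} [NormedAddCommGroup E] [NormedSpace ℂ E] {f g : ℝ → E}

lemma MellinConvergent.congr {s : ℂ} (hf : MellinConvergent f s) (hfg : EqOn f g (Ioi 0)) :
    MellinConvergent g s :=
  hf.congr_fun (fun _ ht ↦ congr_arg _ (hfg ht)) measurableSet_Ioi

lemma mellin_congr (hfg : EqOn f g (Ioi 0)) (s : ℂ) : mellin f s = mellin g s :=
  setIntegral_congr_fun measurableSet_Ioi fun _ ht ↦ by rw [hfg ht]

end Mellin

lemma MeasureTheory.integrable_tsum_of_summable_integral_norm {α E ι : Type*} [MeasurableSpace α]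
    {μ : Measure α} [NormedAddCommGroup E] [CompleteSpace E] [Countable ι] {F : ι → α → E}
    (hF_int : ∀ i, Integrable (F i) μ) (hF_sum : Summable fun i ↦ ∫ a, ‖F i a‖ ∂μ) :
    Integrable (fun a ↦ ∑' i, F i a) μ := by
  have hlint : ∑' i, ∫⁻ a, ‖F i a‖ₑ ∂μ ≠ ⊤ := by
    simp_rw [← ofReal_integral_norm_eq_lintegral_enorm (hF_int _)]
    rw [← ENNReal.ofReal_tsum_of_nonneg (fun i ↦ integral_nonneg fun a ↦ norm_nonneg _) hF_sum]
    exact ENNReal.ofReal_ne_top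
  have hmeas : AEMeasurable (fun a ↦ ∑' i, ‖F i a‖ₑ) μ :=
    AEMeasurable.tsum fun i ↦ (hF_int i).1.enorm
  have hsum : ∀ᵐ a ∂μ, Summable fun i ↦ F i a := by
    filter_upwards [ae_lt_top' hmeas (by rwa [lintegral_tsum fun i ↦ (hF_int i).1.enorm])]
      with a ha
    exact (tsum_enorm_ne_top_iff_summable_norm.mp ha.ne).of_norm
  refine ⟨?_, ?_⟩
  · exact aestronglyMeasurable_of_tendsto_ae atTop
      (fun s ↦ Finset.aestronglyMeasurable_fun_sum s fun i _ ↦ (hF_int i).1)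
      (hsum.mono fun a ha ↦ ha.hasSum)
  · calc ∫⁻ a, ‖∑' i, F i a‖ₑ ∂μ ≤ ∫⁻ a, ∑' i, ‖F i a‖ₑ ∂μ :=
          lintegral_mono fun a ↦ enorm_tsum_le_tsum_enorm
      _ < ⊤ := by
          rw [lintegral_tsum fun i ↦ (hF_int i).1.enorm]
          exact hlint.lt_top

lemma integral_norm_cpow_smul_comp_mul_left {E : Type*} [NormedAddCommGroup E] [NormedSpace ℂ E]
    (f : ℝ → E) (w : ℂ) {b : ℝ} (hb : 0 < b) :
    ∫ t in Ioi (0 : ℝ), ‖(t : ℂ) ^ (w - 1) • f (b * t)‖ =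
      b ^ (-w.re) * ∫ t in Ioi (0 : ℝ), ‖(t : ℂ) ^ (w - 1) • f t‖ := by
  have hscale : EqOn (fun t : ℝ ↦ ‖(t : ℂ) ^ (w - 1) • f (b * t)‖)
      (fun t ↦ b ^ (1 - w.re) * ‖((b * t : ℝ) : ℂ) ^ (w - 1) • f (b * t)‖) (Ioi (0 : ℝ)) :=
    fun t (ht : 0 < t) ↦ by
      simp only [norm_smul, norm_cpow_eq_rpow_re_of_pos ht, norm_cpow_eq_rpow_re_of_pos
        (mul_pos hb ht), sub_re, one_re, Real.mul_rpow hb.le ht.le, ← mul_assoc,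
        ← Real.rpow_add hb]
      rw [show 1 - w.re + (w.re - 1) = 0 by ring, Real.rpow_zero, one_mul]
  rw [setIntegral_congr_fun measurableSet_Ioi hscale, integral_const_mul,
    integral_comp_mul_left_Ioi (fun u ↦ ‖(u : ℂ) ^ (w - 1) • f u‖) _ hb, mul_zero, smul_eq_mul,
    ← mul_assoc, ← Real.rpow_neg_one, ← Real.rpow_add hb]
  ring_nf

lemma hasMellin_tsum_smul_comp_mul_left {E ι : Type*} [NormedAddCommGroup E] [NormedSpace ℂ E]
    [CompleteSpace E] [Countable ι] {f : ℝ → E} {w : ℂ} {m : E} (hf : HasMellin f w m)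
    {a : ι → ℂ} {l : ι → ℝ} (hl : ∀ i, 0 < l i)
    (ha : Summable fun i ↦ ‖a i * (l i : ℂ) ^ (-w)‖) :
    HasMellin (fun t ↦ ∑' i, a i • f (l i * t)) w ((∑' i, a i * (l i : ℂ) ^ (-w)) • m) := by
  set G : ι → ℝ → E := fun i t ↦ (t : ℂ) ^ (w - 1) • a i • f (l i * t)
  have hG_int : ∀ i, IntegrableOn (G i) (Ioi 0) := fun i ↦
    ((MellinConvergent.comp_mul_left (hl i)).mpr hf.1).const_smul (a i)
  have hG_integral : ∀ i, ∫ t in Ioi (0 : ℝ), G i t = (a i * (l i : ℂ) ^ (-w)) • m := fun i ↦ by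
    rw [← hf.2, mul_smul, ← mellin_comp_mul_left _ _ (hl i), ← mellin_const_smul]
    rfl
  have hG_norm : ∀ i, ∫ t in Ioi (0 : ℝ), ‖G i t‖ =
      ‖a i * (l i : ℂ) ^ (-w)‖ * ∫ t in Ioi (0 : ℝ), ‖(t : ℂ) ^ (w - 1) • f t‖ := fun i ↦ by
    simp only [G, smul_comm _ (a i), norm_smul (a i)]
    rw [integral_const_mul, integral_norm_cpow_smul_comp_mul_left _ _ (hl i), norm_mul,
      norm_cpow_eq_rpow_re_of_pos (hl i), neg_re, mul_assoc]
  have hG_tsum : EqOn (fun t : ℝ ↦ (t : ℂ) ^ (w - 1) • ∑' i, a i • f (l i * t))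
      (fun t ↦ ∑' i, G i t) (Ioi 0) := fun t _ ↦
    (tsum_const_smul'' _).symm
  have hG_norm_sum : Summable fun i ↦ ∫ t in Ioi (0 : ℝ), ‖G i t‖ :=
    (ha.mul_right _).congr fun i ↦ (hG_norm i).symm
  refine ⟨IntegrableOn.congr_fun (integrable_tsum_of_summable_integral_norm hG_int hG_norm_sum)
    hG_tsum.symm measurableSet_Ioi, ?_⟩
  rw [mellin, setIntegral_congr_fun measurableSet_Ioi hG_tsum,
    ← integral_tsum_of_summable_integral_norm hG_int hG_norm_sum]
  simp only [hG_integral]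
  exact ha.of_norm.tsum_smul_const m

lemma summable_norm_mul_cpow_neg_of_norm_le_rpow {a : ℕ+ → ℂ} {C A : ℝ}
    (ha : ∀ n : ℕ+, ‖a n‖ ≤ C * (n : ℝ) ^ A) {w : ℂ} (hw : A + 1 < w.re) :
    Summable fun n : ℕ+ ↦ ‖a n * (n : ℂ) ^ (-w)‖ := by
  have hpow : Summable fun n : ℕ+ ↦ C * (n : ℝ) ^ (A - w.re) :=
    ((Real.summable_nat_rpow.mpr (by linarith)).comp_injective PNat.coe_injective).mul_left C
  refine hpow.of_nonneg_of_le (fun n ↦ norm_nonneg _) fun n ↦ ?_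
  have hn : (0 : ℝ) < n := by exact_mod_cast n.pos
  rw [norm_mul, show (n : ℂ) = ((n : ℝ) : ℂ) by norm_cast, norm_cpow_eq_rpow_re_of_pos hn,
    neg_re, sub_eq_add_neg, Real.rpow_add hn, ← mul_assoc]
  exact mul_le_mul_of_nonneg_right (ha n) (by positivity)

lemma Real.one_add_sq_div_two_le_cosh (u : ℝ) : 1 + u ^ 2 / 2 ≤ Real.cosh u := by
  have hsinh : (|u| / 2) ^ 2 ≤ Real.sinh (|u| / 2) ^ 2 :=
    pow_le_pow_left₀ (by positivity) (Real.self_le_sinh_iff.mpr (by positivity)) 2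
  have hcosh : Real.cosh u = 1 + 2 * Real.sinh (|u| / 2) ^ 2 := by
    rw [← Real.cosh_abs, ← mul_div_cancel₀ |u| (two_ne_zero' ℝ), Real.cosh_two_mul,
      Real.cosh_sq]
    ring_nf
  rw [hcosh, ← sq_abs u]
  linarith

lemma abs_Kir_le (r : ℝ) {t : ℝ} (ht : 0 < t) :
    |Kir r t| ≤ √(π / (2 * t)) * Real.exp (-t) := by
  have hbound : ∀ u, ‖Real.exp (-t * Real.cosh u) * Real.cos (r * u)‖ ≤
      Real.exp (-t) * Real.exp (-(t / 2) * u ^ 2) := fun u ↦ by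
    rw [norm_mul, Real.norm_of_nonneg (Real.exp_pos _).le, ← Real.exp_add]
    calc Real.exp (-t * Real.cosh u) * ‖Real.cos (r * u)‖ ≤ Real.exp (-t * Real.cosh u) :=
          mul_le_of_le_one_right (Real.exp_pos _).le (Real.abs_cos_le_one _)
      _ ≤ Real.exp (-t + -(t / 2) * u ^ 2) := by
          gcongr
          nlinarith [Real.one_add_sq_div_two_le_cosh u]
  have hgauss : ∫ u in Ioi (0 : ℝ), Real.exp (-t) * Real.exp (-(t / 2) * u ^ 2) =
      √(π / (2 * t)) * Real.exp (-t) := by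
    have h : π / (t / 2) = 2 ^ 2 * (π / (2 * t)) := by field_simp
    rw [integral_const_mul, integral_gaussian_Ioi, h, Real.sqrt_mul (by positivity),
      Real.sqrt_sq zero_le_two]
    ring
  rw [← Real.norm_eq_abs, ← hgauss]
  exact norm_integral_le_of_norm_le
    ((integrable_exp_neg_mul_sq (by positivity)).const_mul _).integrableOn
    (.of_forall hbound)

lemma measurable_Kir (r : ℝ) : Measurable (Kir r) :=
  (Continuous.stronglyMeasurable (by fun_prop :
    Continuous fun p : ℝ × ℝ ↦ Real.exp (-p.1 * Real.cosh p.2) * Real.cos (r * p.2))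
    ).integral_prod_right'.measurable

lemma mellinConvergent_cos_mul_Kir (r T : ℝ) {s : ℂ} (hs : 1 / 2 < s.re) :
    MellinConvergent (fun t : ℝ ↦ (Real.cos (T * t) : ℂ) * Kir r t) s := by
  have hmeas : Measurable fun t : ℝ ↦ (Real.cos (T * t) : ℂ) * Kir r t :=
    (measurable_ofReal.comp (by fun_prop)).mul (measurable_ofReal.comp (measurable_Kir r))
  rw [MellinConvergent, mellin_convergent_iff_norm subset_rfl measurableSet_Ioi
    hmeas.aestronglyMeasurable]
  refine ((Real.GammaIntegral_convergent (s := s.re - 1 / 2) (by linarith)).const_mul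
    √(π / 2)).mono' ((measurable_id.pow_const _).mul hmeas.norm).aestronglyMeasurable ?_
  filter_upwards [ae_restrict_mem measurableSet_Ioi] with t (ht : 0 < t)
  have hsqrt : √(π / (2 * t)) = √(π / 2) * t ^ (-(1 / 2 : ℝ)) := by
    rw [← div_div, Real.sqrt_div' _ ht.le, Real.sqrt_eq_rpow t, Real.rpow_neg ht.le,
      div_eq_mul_inv]
  calc ‖t ^ (s.re - 1) * ‖(Real.cos (T * t) : ℂ) * Kir r t‖‖
      = t ^ (s.re - 1) * (|Real.cos (T * t)| * |Kir r t|) := by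
        simp only [norm_mul, norm_real, Real.norm_eq_abs, abs_abs,
          abs_of_pos (Real.rpow_pos_of_pos ht _)]
    _ ≤ t ^ (s.re - 1) * (1 * (√(π / (2 * t)) * Real.exp (-t))) := by
        gcongr
        exacts [Real.abs_cos_le_one _, abs_Kir_le r ht]
    _ = √(π / 2) * (Real.exp (-t) * t ^ (s.re - 1 / 2 - 1)) := by
        rw [hsqrt, show s.re - 1 / 2 - 1 = (s.re - 1) + -(1 / 2) by ring, Real.rpow_add ht]
        ring

lemma Wr_neg_one_add_I_div_mul (r : ℝ) {T : ℝ} (hT : 0 < T) {t : ℝ} (ht : 0 ≤ t) :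
    Wr r ((-1 + I / T) * t) = (2 / √(2 * π) : ℝ) * ((2 * π / T * t : ℝ) : ℂ) ^ (1 / 2 : ℂ) *
      ((Real.cos (T * (2 * π / T * t)) : ℂ) * Kir r (2 * π / T * t)) := by
  have him : ((-1 + I / T) * t).im = t / T := by simp [div_ofReal_im, inv_mul_eq_div]
  have hre : ((-1 + I / T) * t).re = -t := by simp [div_ofReal_re]
  have hsqrt : √(t / T) = √(2 * π / T * t) / √(2 * π) := by
    rw [← Real.sqrt_div' _ (by positivity)]
    congr 1
    field_simp
  have hcpow : ((2 * π / T * t : ℝ) : ℂ) ^ (1 / 2 : ℂ) = (√(2 * π / T * t) : ℂ) := by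
    rw [Real.sqrt_eq_rpow, ofReal_cpow (by positivity)]
    norm_num
  rw [Wr, him, hre, hcpow, hsqrt, show 2 * π * (t / T) = 2 * π / T * t by ring,
    show 2 * π * -t = -(T * (2 * π / T * t)) by field_simp, Real.cos_neg]
  push_cast
  ring

lemma hasMellin_Wr_ray (r : ℝ) {T : ℝ} (hT : 0 < T) {s : ℂ} (hs : 1 / 2 < s.re) :
    HasMellin (fun t : ℝ ↦ Wr r ((-1 + I / T) * t)) (s - 1 / 2)
      (2 * (T : ℂ) ^ (s - 1 / 2) / (2 * π : ℂ) ^ s *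
        ∫ t in Ioi (0 : ℝ), (Real.cos (T * t) : ℂ) * (Kir r t : ℂ) * (t : ℂ) ^ (s - 1)) := by
  set g : ℝ → ℂ := fun u ↦ (Real.cos (T * u) : ℂ) * Kir r u
  set h : ℝ → ℂ := fun u ↦ (u : ℂ) ^ (1 / 2 : ℂ) • g u
  have hb : 0 < 2 * π / T := by positivity
  have hWr : EqOn (fun t ↦ ((2 / √(2 * π) : ℝ) : ℂ) • h (2 * π / T * t))
      (fun t : ℝ ↦ Wr r ((-1 + I / T) * t)) (Ioi 0) := fun t ht ↦ by
    simp only [h, g, smul_eq_mul, Wr_neg_one_add_I_div_mul r hT (le_of_lt ht), mul_assoc]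
  have hh : HasMellin h (s - 1 / 2) (mellin g s) := by
    refine ⟨MellinConvergent.cpow_smul.mpr ?_, by rw [mellin_cpow_smul, sub_add_cancel]⟩
    simpa only [sub_add_cancel] using mellinConvergent_cos_mul_Kir r T hs
  have hconst : ((2 / √(2 * π) : ℝ) : ℂ) * ((2 * π / T : ℝ) : ℂ) ^ (-(s - 1 / 2)) =
      2 * (T : ℂ) ^ (s - 1 / 2) / (2 * π : ℂ) ^ s := by
    have h2π : (0 : ℝ) < 2 * π := by positivity
    have hsqrt : ((√(2 * π) : ℝ) : ℂ) = ((2 * π : ℝ) : ℂ) ^ (1 / 2 : ℂ) := by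
      rw [Real.sqrt_eq_rpow, ofReal_cpow h2π.le]
      norm_num
    have hP : ((2 * π : ℝ) : ℂ) ≠ 0 := ofReal_ne_zero.mpr h2π.ne'
    have hpow : ((2 * π : ℝ) : ℂ) ^ (1 / 2 : ℂ) * ((2 * π : ℝ) : ℂ) ^ (s - 1 / 2) =
        (2 * π : ℂ) ^ s := by
      rw [← cpow_add _ _ hP, add_sub_cancel]
      push_cast
      rfl
    simp only [ofReal_div]
    rw [div_cpow_ofReal_nonneg h2π.le hT.le, ← hpow, hsqrt, cpow_neg, cpow_neg, ofReal_ofNat]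
    field_simp
  refine ⟨(((MellinConvergent.comp_mul_left hb).mpr hh.1).const_smul _).congr hWr, ?_⟩
  rw [← mellin_congr hWr, mellin_const_smul, mellin_comp_mul_left _ _ hb, hh.2, smul_eq_mul,
    smul_eq_mul, ← mul_assoc, hconst]
  congr 1
  exact setIntegral_congr_fun measurableSet_Ioi fun t _ ↦ mul_comm _ _

theorem stmt14_general (r A C : ℝ) (hA : 0 ≤ A) (a : ℕ+ → ℂ)
    (ha : ∀ n : ℕ+, ‖a n‖ ≤ C * (n : ℝ) ^ A)
    (f : ℂ → ℂ)
    (hf : ∀ z : ℂ, 0 < z.im → f z = ∑' n : ℕ+, a n * Wr r ((n : ℂ) * z))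
    (T₁ : ℝ) (hT₁ : 0 < T₁) (α₁ : ℂ) (hα : α₁ = -1 + Complex.I / T₁)
    (s : ℂ) (hs : A + 3 / 2 < s.re) :
    IntegrableOn (fun t : ℝ => f (α₁ * t) * (t : ℂ) ^ (s - 3 / 2)) (Set.Ioi 0) ∧
    Summable (fun n : ℕ+ => ‖a n * (n : ℂ) ^ (-(s - 1 / 2))‖) ∧
    IntegrableOn
      (fun t : ℝ => (Real.cos (T₁ * t) : ℂ) * (Kir r t : ℂ) * (t : ℂ) ^ (s - 1))
      (Set.Ioi 0) ∧
    ∫ t in Set.Ioi (0 : ℝ), f (α₁ * t) * (t : ℂ) ^ (s - 3 / 2) =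
      (2 * (T₁ : ℂ) ^ (s - 1 / 2) / (2 * π : ℂ) ^ s) *
        (∑' n : ℕ+, a n * (n : ℂ) ^ (-(s - 1 / 2))) *
        ∫ t in Set.Ioi (0 : ℝ),
          (Real.cos (T₁ * t) : ℂ) * (Kir r t : ℂ) * (t : ℂ) ^ (s - 1) := by
  have hs' : 1 / 2 < s.re := by linarith
  have hsum : Summable fun n : ℕ+ ↦ ‖a n * (n : ℂ) ^ (-(s - 1 / 2))‖ :=
    summable_norm_mul_cpow_neg_of_norm_le_rpow ha (by rw [sub_re]; norm_num; linarith)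
  obtain ⟨hconv, hmellin⟩ := hasMellin_tsum_smul_comp_mul_left (hasMellin_Wr_ray r hT₁ hs')
    (l := fun n : ℕ+ ↦ (n : ℝ)) (fun n ↦ by positivity) (by simpa using hsum)
  have hlhs : EqOn (fun t : ℝ ↦ (t : ℂ) ^ (s - 1 / 2 - 1) •
        ∑' n : ℕ+, a n • Wr r ((-1 + I / T₁) * ((n : ℝ) * t : ℝ)))
      (fun t ↦ f (α₁ * t) * (t : ℂ) ^ (s - 3 / 2)) (Ioi 0) := fun t (ht : 0 < t) ↦ by
    dsimp only
    rw [hf _ (by simp [hα, ht, hT₁]), hα, smul_eq_mul, mul_comm,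
      show s - 1 / 2 - 1 = s - 3 / 2 by ring]
    congr 1
    refine tsum_congr fun n ↦ ?_
    rw [smul_eq_mul]
    push_cast
    ring_nf
  refine ⟨hconv.congr_fun hlhs measurableSet_Ioi, hsum, ?_, ?_⟩
  · simpa only [MellinConvergent, smul_eq_mul, mul_comm] using
      mellinConvergent_cos_mul_Kir r T₁ hs'
  · rw [← setIntegral_congr_fun measurableSet_Ioi hlhs]
    refine hmellin.trans ?_
    simp only [smul_eq_mul, ofReal_natCast]
    ring

theorem stmt14 (r A C : ℝ) (hA : 0 ≤ A) (hC : 0 < C) (a : ℕ+ → ℂ)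
    (ha : ∀ n : ℕ+, ‖a n‖ ≤ C * (n : ℝ) ^ A)
    (f : ℂ → ℂ)
    (hf : ∀ z : ℂ, 0 < z.im → f z = ∑' n : ℕ+, a n * Wr r ((n : ℂ) * z))
    (T₁ : ℝ) (hT₁ : 0 < T₁) (α₁ : ℂ) (hα : α₁ = -1 + Complex.I / T₁)
    (s : ℂ) (hs : A + 3 / 2 < s.re) :
    IntegrableOn (fun t : ℝ => f (α₁ * t) * (t : ℂ) ^ (s - 3 / 2)) (Set.Ioi 0) ∧
    Summable (fun n : ℕ+ => ‖a n * (n : ℂ) ^ (-(s - 1 / 2))‖) ∧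
    IntegrableOn
      (fun t : ℝ => (Real.cos (T₁ * t) : ℂ) * (Kir r t : ℂ) * (t : ℂ) ^ (s - 1))
      (Set.Ioi 0) ∧
    ∫ t in Set.Ioi (0 : ℝ), f (α₁ * t) * (t : ℂ) ^ (s - 3 / 2) =
      (2 * (T₁ : ℂ) ^ (s - 1 / 2) / (2 * π : ℂ) ^ s) *
        (∑' n : ℕ+, a n * (n : ℂ) ^ (-(s - 1 / 2))) *
        ∫ t in Set.Ioi (0 : ℝ),
          (Real.cos (T₁ * t) : ℂ) * (Kir r t : ℂ) * (t : ℂ) ^ (s - 1) :=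
  stmt14_general r A C hA a ha f hf T₁ hT₁ α₁ hα s hs
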